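/- Consider a finite vertex set V, channel sizes c : V → ℕ with 1 ≤ c(i) ≤ C, neighborhoods N : V → Finset V, hidden states h : V → ℝ^{d'}, and coordinates X(i) ∈ ℝ^{3×c(i)} for each i ∈ V. Let one message-passing layer be defined, for arbitrary functions φ_m : ℝ^{d'} × ℝ^{d'} × ℝ^{d×d} → ℝ^{m}, φ_x : ℝ^{m} → ℝ^{C}, φ_h : ℝ^{d'} × ℝ^{m} → ℝ^{d'}, by: m_{ij} = φ_m(h(i), h(j), T_R(X(i), X(j))/(‖T_R(X(i), X(j))‖_F + 1)); X_{ij} = T_S(X(i) − μ_j 1ᵀ, φ_x(m_{ij})) with μ_j the column mean of X(j); h'(i) = φ_h(h(i), Σ_{j ∈ N(i)} m_{ij}); X'(i) = X(i) + (1/|N(i)|) Σ_{j ∈ N(i)} X_{ij}, where T_R is the geometric relation extractor with fixed parameters A, w per vertex and T_S the average-pooling geometric message scaler. Then this layer is E(3)-invariant on hidden states and E(3)-equivariant on coordinates: for every real orthogonal 3×3 matrix Q and t ∈ ℝ³, replacing every X(i) by Q X(i) + t 1ᵀ leaves every h'(i) unchanged and replaces every X'(i) by Q X'(i) + t 1ᵀ.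 -/

import Mathlib

/-! A rigid motion preserves all distances between atoms, so the relation matrices `T_R`, the
messages `m_ij` and hence the new hidden states do not change. The geometric message is
`X_i − μ_j 1ᵀ` with its columns rescaled by weights that depend only on `m_ij`; the translation
cancels against the moved mean `Q μ_j + t`, so each geometric message is
multiplied by `Q`, and `X'(i) = X(i) + (linear combination of messages)` moves by `Q · + t 1ᵀ`. -/

open Matrix BigOperators

noncomputable section

/-- Euclidean distance between the `p`-th column of `X` and the `q`-th column of `Y`. -/
def colDist {ci cj : ℕ} (X : Matrix (Fin 3) (Fin ci) ℝ) (Y : Matrix (Fin 3) (Fin cj) ℝ)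
    (p : Fin ci) (q : Fin cj) : ℝ :=
  Real.sqrt (∑ r : Fin 3, (X r p - Y r q) ^ 2)

/-- Rigid (Euclidean) action `g·X = QX + t1ᵀ`, acting columnwise by `x ↦ Qx + t`. -/
def rigid {c : ℕ} (Q : Matrix (Fin 3) (Fin 3) ℝ) (t : Fin 3 → ℝ)
    (X : Matrix (Fin 3) (Fin c) ℝ) : Matrix (Fin 3) (Fin c) ℝ :=
  Matrix.of fun r p => (∑ s : Fin 3, Q r s * X s p) + t r

/-- Geometric relation extractor `T_R(X_i, X_j) = A_iᵀ ((w_i w_jᵀ) ⊙ D(X_i, X_j)) A_j`. -/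
def TR {ci cj d : ℕ} (Ai : Matrix (Fin ci) (Fin d) ℝ) (Aj : Matrix (Fin cj) (Fin d) ℝ)
    (wi : Fin ci → ℝ) (wj : Fin cj → ℝ)
    (X : Matrix (Fin 3) (Fin ci) ℝ) (Y : Matrix (Fin 3) (Fin cj) ℝ) :
    Matrix (Fin d) (Fin d) ℝ :=
  Aiᵀ * (Matrix.of fun p q => wi p * wj q * colDist X Y p q) * Aj

/-- Frobenius norm of a real matrix. -/
def frob {n m : ℕ} (M : Matrix (Fin n) (Fin m) ℝ) : ℝ :=
  Real.sqrt (∑ i : Fin n, ∑ j : Fin m, (M i j) ^ 2)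

/-- Average pooling of `s ∈ ℝ^C` with window size `C − c + 1` and stride 1. -/
def avgPool {c C : ℕ} (hc : c ≤ C) (s : Fin C → ℝ) : Fin c → ℝ :=
  fun k => (∑ m : Fin (C - c + 1), s ⟨k.val + m.val, by omega⟩) / ((C - c + 1 : ℕ) : ℝ)

/-- Geometric message scaler `T_S(X, s) = X · diag(s')`. -/
def TS {c C : ℕ} (hc : c ≤ C) (X : Matrix (Fin 3) (Fin c) ℝ) (s : Fin C → ℝ) :
    Matrix (Fin 3) (Fin c) ℝ :=
  Matrix.of fun r p => X r p * avgPool hc s p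

variable {V : Type*} {d dh m' C : ℕ}

/-- Non-geometric message `m_{ij}` between vertices `i` and `j`. -/
def msgOf (c : V → ℕ)
    (A : (i : V) → Matrix (Fin (c i)) (Fin d) ℝ) (w : (i : V) → Fin (c i) → ℝ)
    (φm : (Fin dh → ℝ) → (Fin dh → ℝ) → Matrix (Fin d) (Fin d) ℝ → (Fin m' → ℝ))
    (h : V → Fin dh → ℝ) (X : (i : V) → Matrix (Fin 3) (Fin (c i)) ℝ)
    (i j : V) : Fin m' → ℝ :=
  φm (h i) (h j)
    ((frob (TR (A i) (A j) (w i) (w j) (X i) (X j)) + 1)⁻¹ •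
      TR (A i) (A j) (w i) (w j) (X i) (X j))

/-- Geometric message `X_{ij} = T_S(X_i − μ_j 1ᵀ, φ_x(m_{ij}))`. -/
def xMsgOf (c : V → ℕ) (hC : ∀ i, c i ≤ C)
    (A : (i : V) → Matrix (Fin (c i)) (Fin d) ℝ) (w : (i : V) → Fin (c i) → ℝ)
    (φm : (Fin dh → ℝ) → (Fin dh → ℝ) → Matrix (Fin d) (Fin d) ℝ → (Fin m' → ℝ))
    (φx : (Fin m' → ℝ) → (Fin C → ℝ))
    (h : V → Fin dh → ℝ) (X : (i : V) → Matrix (Fin 3) (Fin (c i)) ℝ)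
    (i j : V) : Matrix (Fin 3) (Fin (c i)) ℝ :=
  TS (hC i) (Matrix.of fun r p => X i r p - (∑ q : Fin (c j), X j r q) / ((c j : ℕ) : ℝ))
    (φx (msgOf c A w φm h X i j))

/-- Hidden-state update `h'(i) = φ_h(h(i), Σ_{j ∈ N(i)} m_{ij})`. -/
def hOut (c : V → ℕ)
    (A : (i : V) → Matrix (Fin (c i)) (Fin d) ℝ) (w : (i : V) → Fin (c i) → ℝ)
    (φm : (Fin dh → ℝ) → (Fin dh → ℝ) → Matrix (Fin d) (Fin d) ℝ → (Fin m' → ℝ))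
    (φh : (Fin dh → ℝ) → (Fin m' → ℝ) → (Fin dh → ℝ))
    (N : V → Finset V)
    (h : V → Fin dh → ℝ) (X : (i : V) → Matrix (Fin 3) (Fin (c i)) ℝ)
    (i : V) : Fin dh → ℝ :=
  φh (h i) (∑ j ∈ N i, msgOf c A w φm h X i j)

/-- Coordinate update `X'(i) = X(i) + (1/|N(i)|) Σ_{j ∈ N(i)} X_{ij}`. -/
def xOut (c : V → ℕ) (hC : ∀ i, c i ≤ C)
    (A : (i : V) → Matrix (Fin (c i)) (Fin d) ℝ) (w : (i : V) → Fin (c i) → ℝ)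
    (φm : (Fin dh → ℝ) → (Fin dh → ℝ) → Matrix (Fin d) (Fin d) ℝ → (Fin m' → ℝ))
    (φx : (Fin m' → ℝ) → (Fin C → ℝ))
    (N : V → Finset V)
    (h : V → Fin dh → ℝ) (X : (i : V) → Matrix (Fin 3) (Fin (c i)) ℝ)
    (i : V) : Matrix (Fin 3) (Fin (c i)) ℝ :=
  X i + (((N i).card : ℝ))⁻¹ • ∑ j ∈ N i, xMsgOf c hC A w φm φx h X i j

lemma dotProduct_mulVec_self_of_transpose_mul_self {n R : Type*} [Fintype n] [DecidableEq n]
    [CommRing R] {Q : Matrix n n R} (hQ : Qᵀ * Q = 1) (v : n → R) :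
    Q *ᵥ v ⬝ᵥ Q *ᵥ v = v ⬝ᵥ v := by
  rw [dotProduct_mulVec, ← mulVec_transpose, mulVec_mulVec, hQ, one_mulVec]

lemma rigid_eq_mul_add_replicateCol {c : ℕ} (Q : Matrix (Fin 3) (Fin 3) ℝ) (t : Fin 3 → ℝ)
    (X : Matrix (Fin 3) (Fin c) ℝ) : rigid Q t X = Q * X + replicateCol (Fin c) t := by
  ext r p
  simp [rigid, mul_apply]

lemma rigid_add_mul {c : ℕ} (Q : Matrix (Fin 3) (Fin 3) ℝ) (t : Fin 3 → ℝ)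
    (X M : Matrix (Fin 3) (Fin c) ℝ) : rigid Q t (X + M) = rigid Q t X + Q * M := by
  rw [rigid_eq_mul_add_replicateCol, rigid_eq_mul_add_replicateCol, Matrix.mul_add, add_right_comm]

lemma colDist_eq_sqrt_dotProduct {ci cj : ℕ} (X : Matrix (Fin 3) (Fin ci) ℝ)
    (Y : Matrix (Fin 3) (Fin cj) ℝ) (p : Fin ci) (q : Fin cj) :
    colDist X Y p q = √((Xᵀ p - Yᵀ q) ⬝ᵥ (Xᵀ p - Yᵀ q)) := by
  simp [colDist, dotProduct, sq]

lemma transpose_rigid_apply {c : ℕ} (Q : Matrix (Fin 3) (Fin 3) ℝ) (t : Fin 3 → ℝ)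
    (X : Matrix (Fin 3) (Fin c) ℝ) (p : Fin c) : (rigid Q t X)ᵀ p = Q *ᵥ Xᵀ p + t := by
  ext r
  simp [rigid, mulVec, dotProduct]

lemma colDist_rigid {ci cj : ℕ} {Q : Matrix (Fin 3) (Fin 3) ℝ} (hQ : Qᵀ * Q = 1)
    (t : Fin 3 → ℝ) (X : Matrix (Fin 3) (Fin ci) ℝ) (Y : Matrix (Fin 3) (Fin cj) ℝ) :
    colDist (rigid Q t X) (rigid Q t Y) = colDist X Y := by
  ext p q
  rw [colDist_eq_sqrt_dotProduct, colDist_eq_sqrt_dotProduct, transpose_rigid_apply,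
    transpose_rigid_apply, add_sub_add_right_eq_sub, ← mulVec_sub,
    dotProduct_mulVec_self_of_transpose_mul_self hQ]

lemma TR_rigid {ci cj d : ℕ} (Ai : Matrix (Fin ci) (Fin d) ℝ) (Aj : Matrix (Fin cj) (Fin d) ℝ)
    (wi : Fin ci → ℝ) (wj : Fin cj → ℝ) {Q : Matrix (Fin 3) (Fin 3) ℝ} (hQ : Qᵀ * Q = 1)
    (t : Fin 3 → ℝ) (X : Matrix (Fin 3) (Fin ci) ℝ) (Y : Matrix (Fin 3) (Fin cj) ℝ) :
    TR Ai Aj wi wj (rigid Q t X) (rigid Q t Y) = TR Ai Aj wi wj X Y := by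
  rw [TR, TR, colDist_rigid hQ]

lemma TS_eq_mul_diagonal {c C : ℕ} (hc : c ≤ C) (X : Matrix (Fin 3) (Fin c) ℝ)
    (s : Fin C → ℝ) : TS hc X s = X * diagonal (avgPool hc s) := by
  ext r p
  simp [TS]

lemma TS_mul_left {c C : ℕ} (hc : c ≤ C) (Q : Matrix (Fin 3) (Fin 3) ℝ)
    (X : Matrix (Fin 3) (Fin c) ℝ) (s : Fin C → ℝ) : TS hc (Q * X) s = Q * TS hc X s := by
  rw [TS_eq_mul_diagonal, TS_eq_mul_diagonal, Matrix.mul_assoc]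

lemma rowMean_rigid {c : ℕ} (hc : 0 < c) (Q : Matrix (Fin 3) (Fin 3) ℝ) (t : Fin 3 → ℝ)
    (Y : Matrix (Fin 3) (Fin c) ℝ) :
    (fun r => (∑ q, rigid Q t Y r q) / (c : ℝ))
      = Q *ᵥ (fun r => (∑ q, Y r q) / (c : ℝ)) + t := by
  have hc' : (c : ℝ) ≠ 0 := by positivity
  ext r
  simp only [rigid, of_apply, Pi.add_apply, mulVec, dotProduct]
  rw [Finset.sum_add_distrib, Finset.sum_comm, Finset.sum_const, Finset.card_univ,
    Fintype.card_fin, nsmul_eq_mul, add_div, mul_div_cancel_left₀ _ hc', Finset.sum_div]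
  simp only [← Finset.mul_sum, mul_div_assoc]

lemma sub_rowMean_rigid {ci cj : ℕ} (hcj : 0 < cj) (Q : Matrix (Fin 3) (Fin 3) ℝ)
    (t : Fin 3 → ℝ) (X : Matrix (Fin 3) (Fin ci) ℝ) (Y : Matrix (Fin 3) (Fin cj) ℝ) :
    (of fun r p => rigid Q t X r p - (∑ q, rigid Q t Y r q) / (cj : ℝ))
      = Q * of fun r p => X r p - (∑ q, Y r q) / (cj : ℝ) := by
  ext r p
  rw [of_apply, congrFun (rowMean_rigid hcj Q t Y) r]
  simp only [rigid, of_apply, Pi.add_apply, mulVec, dotProduct, mul_apply, mul_sub,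
    Finset.sum_sub_distrib]
  ring

lemma msgOf_rigid (c : V → ℕ)
    (A : (i : V) → Matrix (Fin (c i)) (Fin d) ℝ) (w : (i : V) → Fin (c i) → ℝ)
    (φm : (Fin dh → ℝ) → (Fin dh → ℝ) → Matrix (Fin d) (Fin d) ℝ → (Fin m' → ℝ))
    (h : V → Fin dh → ℝ) (X : (i : V) → Matrix (Fin 3) (Fin (c i)) ℝ)
    {Q : Matrix (Fin 3) (Fin 3) ℝ} (hQ : Qᵀ * Q = 1) (t : Fin 3 → ℝ) (i j : V) :
    msgOf c A w φm h (fun k => rigid Q t (X k)) i j = msgOf c A w φm h X i j := by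
  rw [msgOf, msgOf, TR_rigid _ _ _ _ hQ]

lemma xMsgOf_rigid (c : V → ℕ) (hcpos : ∀ i, 0 < c i) (hC : ∀ i, c i ≤ C)
    (A : (i : V) → Matrix (Fin (c i)) (Fin d) ℝ) (w : (i : V) → Fin (c i) → ℝ)
    (φm : (Fin dh → ℝ) → (Fin dh → ℝ) → Matrix (Fin d) (Fin d) ℝ → (Fin m' → ℝ))
    (φx : (Fin m' → ℝ) → (Fin C → ℝ))
    (h : V → Fin dh → ℝ) (X : (i : V) → Matrix (Fin 3) (Fin (c i)) ℝ)
    {Q : Matrix (Fin 3) (Fin 3) ℝ} (hQ : Qᵀ * Q = 1) (t : Fin 3 → ℝ) (i j : V) :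
    xMsgOf c hC A w φm φx h (fun k => rigid Q t (X k)) i j
      = Q * xMsgOf c hC A w φm φx h X i j := by
  rw [xMsgOf, xMsgOf, msgOf_rigid c A w φm h X hQ, sub_rowMean_rigid (hcpos j), TS_mul_left]

theorem layer_E3_equivariant_general
    (c : V → ℕ) (hcpos : ∀ i, 0 < c i) (hC : ∀ i, c i ≤ C)
    (A : (i : V) → Matrix (Fin (c i)) (Fin d) ℝ) (w : (i : V) → Fin (c i) → ℝ)
    (N : V → Finset V)
    (φm : (Fin dh → ℝ) → (Fin dh → ℝ) → Matrix (Fin d) (Fin d) ℝ → (Fin m' → ℝ))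
    (φx : (Fin m' → ℝ) → (Fin C → ℝ))
    (φh : (Fin dh → ℝ) → (Fin m' → ℝ) → (Fin dh → ℝ))
    (h : V → Fin dh → ℝ) (X : (i : V) → Matrix (Fin 3) (Fin (c i)) ℝ)
    (Q : Matrix (Fin 3) (Fin 3) ℝ) (hQ : Qᵀ * Q = 1) (t : Fin 3 → ℝ) :
    (∀ i, hOut c A w φm φh N h (fun j => rigid Q t (X j)) i = hOut c A w φm φh N h X i) ∧
    (∀ i, xOut c hC A w φm φx N h (fun j => rigid Q t (X j)) i
        = rigid Q t (xOut c hC A w φm φx N h X i)) := by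
  refine ⟨fun i => ?_, fun i => ?_⟩
  · simp only [hOut, msgOf_rigid c A w φm h X hQ t]
  · simp only [xOut, xMsgOf_rigid c hcpos hC A w φm φx h X hQ t, rigid_add_mul,
      Matrix.mul_smul, Matrix.mul_sum]

/-- One adaptive multi-channel message-passing layer is E(3)-invariant on the hidden
states and E(3)-equivariant on the coordinates. -/
theorem layer_E3_equivariant [Fintype V]
    (c : V → ℕ) (hcpos : ∀ i, 0 < c i) (hC : ∀ i, c i ≤ C)
    (A : (i : V) → Matrix (Fin (c i)) (Fin d) ℝ) (w : (i : V) → Fin (c i) → ℝ)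
    (N : V → Finset V) (hN : ∀ i, (N i).Nonempty)
    (φm : (Fin dh → ℝ) → (Fin dh → ℝ) → Matrix (Fin d) (Fin d) ℝ → (Fin m' → ℝ))
    (φx : (Fin m' → ℝ) → (Fin C → ℝ))
    (φh : (Fin dh → ℝ) → (Fin m' → ℝ) → (Fin dh → ℝ))
    (h : V → Fin dh → ℝ) (X : (i : V) → Matrix (Fin 3) (Fin (c i)) ℝ)
    (Q : Matrix (Fin 3) (Fin 3) ℝ) (hQ : Qᵀ * Q = 1) (t : Fin 3 → ℝ) :
    (∀ i, hOut c A w φm φh N h (fun j => rigid Q t (X j)) i = hOut c A w φm φh N h X i) ∧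
    (∀ i, xOut c hC A w φm φx N h (fun j => rigid Q t (X j)) i
        = rigid Q t (xOut c hC A w φm φx N h X i)) :=
  layer_E3_equivariant_general c hcpos hC A w N φm φx φh h X Q hQ t

end
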